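/- arXiv:2303.05287 — 2 statements merged into one kernel-verified Lean document; each statement's English description precedes it below -/
import Mathlib

section
/- Let k ≥ 1 be an integer, λ, γ > 0, and u ≥ 0. Then the matrix u·I − Q_{λ,γ}(k), where I is the identity matrix indexed by Ω(k), is invertible. -/
open Finset

/-- `Omega k` is the set of transient states `(s,i)` of the SIR epidemic in a closed
population of size `k`: `s + i ≤ k` and `i ≥ 1`. -/
def Omega (k : ℕ) : Finset (ℕ × ℕ) :=
  (range (k + 1) ×ˢ range (k + 1)).filter (fun p => p.1 + p.2 ≤ k ∧ 1 ≤ p.2)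

lemma mem_Omega {k : ℕ} {p : ℕ × ℕ} : p ∈ Omega k ↔ p.1 + p.2 ≤ k ∧ 1 ≤ p.2 := by
  simp only [Omega, Finset.mem_filter, Finset.mem_product, Finset.mem_range]
  omega

lemma pair_mem_Omega {k s i : ℕ} (h1 : s + i ≤ k) (h2 : 1 ≤ i) : (s, i) ∈ Omega k :=
  mem_Omega.mpr ⟨h1, h2⟩

lemma mem_Omega' {k s i : ℕ} : (s, i) ∈ Omega k ↔ s + i ≤ k ∧ 1 ≤ i := mem_Omega

/-- The restriction `Q_{λ,γ}(k)` to the transient states `Omega k` of the generator of the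
SIR Markov chain in a closed population of size `k`, with one-to-one infection rate `lam`
and recovery rate `gam`. -/
noncomputable def Qmat (k : ℕ) (lam gam : ℝ) :
    Matrix {p // p ∈ Omega k} {p // p ∈ Omega k} ℝ :=
  fun x y =>
    if y.val = x.val then -(lam * x.val.1 * x.val.2 + gam * x.val.2)
    else if y.val = (x.val.1 - 1, x.val.2 + 1) then lam * x.val.1 * x.val.2
    else if y.val = (x.val.1, x.val.2 - 1) then gam * x.val.2
    else 0

/-- The resolvent matrix `Q̂_{k,λ,γ}(u) = (u·I − Q_{λ,γ}(k))⁻¹`. -/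
noncomputable def Qhat (k : ℕ) (lam gam u : ℝ) :
    Matrix {p // p ∈ Omega k} {p // p ∈ Omega k} ℝ :=
  (u • (1 : Matrix {p // p ∈ Omega k} {p // p ∈ Omega k} ℝ) - Qmat k lam gam)⁻¹



/-- for `k ≥ 1`, `λ, γ > 0` and `u ≥ 0`, the matrix `u·I − Q_{λ,γ}(k)`
indexed by `Ω(k)` is invertible. -/
theorem statement4 (k : ℕ) (hk : 1 ≤ k) (lam gam u : ℝ) (hlam : 0 < lam) (hgam : 0 < gam)
    (hu : 0 ≤ u) :
    IsUnit (u • (1 : Matrix {p // p ∈ Omega k} {p // p ∈ Omega k} ℝ) - Qmat k lam gam) := by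
  set M := u • (1 : Matrix {p // p ∈ Omega k} {p // p ∈ Omega k} ℝ) - Qmat k lam gam with hM
  set b : {p // p ∈ Omega k} → ℤ := fun x => -((2 * x.val.1 + x.val.2 : ℕ) : ℤ) with hb
  -- off-diagonal entries of M: vanish unless the weight strictly decreases
  have key : ∀ x y : {p // p ∈ Omega k}, y ≠ x →
      2 * x.val.1 + x.val.2 ≤ 2 * y.val.1 + y.val.2 → M x y = 0 := by
    intro x y hne hw
    have hvne : y.val ≠ x.val := fun h => hne (Subtype.ext h)
    have hx2 : 1 ≤ x.val.2 := (mem_Omega.mp x.2).2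
    have hone : (1 : Matrix {p // p ∈ Omega k} {p // p ∈ Omega k} ℝ) x y = 0 :=
      Matrix.one_apply_ne (fun h => hne h.symm)
    simp only [hM, Matrix.sub_apply, Matrix.smul_apply, hone, smul_zero, zero_sub,
      neg_eq_zero, Qmat]
    rw [if_neg hvne]
    by_cases h1 : y.val = (x.val.1 - 1, x.val.2 + 1)
    · rw [if_pos h1]
      have e1 : y.val.1 = x.val.1 - 1 := by rw [h1]
      have e2 : y.val.2 = x.val.2 + 1 := by rw [h1]
      have hx1 : x.val.1 = 0 := by omega
      rw [hx1]
      norm_num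
    · rw [if_neg h1]
      by_cases h2 : y.val = (x.val.1, x.val.2 - 1)
      · exfalso
        have e1 : y.val.1 = x.val.1 := by rw [h2]
        have e2 : y.val.2 = x.val.2 - 1 := by rw [h2]
        omega
      · rw [if_neg h2]
  have htri : M.BlockTriangular b := by
    intro x y hlt
    have hw : 2 * x.val.1 + x.val.2 < 2 * y.val.1 + y.val.2 := by
      simp only [hb, neg_lt_neg_iff] at hlt
      exact_mod_cast hlt
    have hne : y ≠ x := by
      intro h; rw [h] at hw; omega
    exact key x y hne hw.le
  have hdiag : ∀ x : {p // p ∈ Omega k}, M x x ≠ 0 := by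
    intro x
    have hx2 : 1 ≤ x.val.2 := (mem_Omega.mp x.2).2
    have hx2' : (1 : ℝ) ≤ (x.val.2 : ℝ) := by exact_mod_cast hx2
    have : M x x = u + (lam * x.val.1 * x.val.2 + gam * x.val.2) := by
      simp [hM, Matrix.sub_apply, Matrix.smul_apply, Matrix.one_apply_eq, Qmat]
      ring
    rw [this]
    have h1 : 0 ≤ lam * x.val.1 * x.val.2 := by positivity
    have h2 : 0 < gam * x.val.2 := by nlinarith
    nlinarith
  have hdet : M.det ≠ 0 := by
    rw [Matrix.BlockTriangular.det htri]
    refine Finset.prod_ne_zero_iff.mpr (fun a _ => ?_)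
    have hblock : M.toSquareBlock b a =
        Matrix.diagonal (fun x : {x // b x = a} => M x.val x.val) := by
      ext i j
      by_cases h : i = j
      · subst h
        simp [Matrix.toSquareBlock_def, Matrix.diagonal_apply_eq]
      · rw [Matrix.diagonal_apply_ne _ h]
        have hval : j.val ≠ i.val := fun hh => h (Subtype.ext hh.symm)
        have hwe : 2 * i.val.val.1 + i.val.val.2 = 2 * j.val.val.1 + j.val.val.2 := by
          have : b i.val = b j.val := by rw [i.2, j.2]
          simp only [hb, neg_inj, Nat.cast_inj] at this
          exact_mod_cast this
        simpa [Matrix.toSquareBlock_def] using key i.val j.val hval hwe.le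
    rw [hblock, Matrix.det_diagonal]
    exact Finset.prod_ne_zero_iff.mpr (fun x _ => hdiag x.val)
  exact (Matrix.isUnit_iff_isUnit_det M).mpr (isUnit_iff_ne_zero.mpr hdet)
end

section
/- Let k ≥ 1 be an integer, λ, γ > 0, and u ≥ 0. Let a^{(k+1)}_{ℓ,w}(u) = [w ≥ ℓ] · (u + λ(k+1−w)w + γw)⁻¹ · ∏_{j=ℓ}^{w−1} (1 + (u + γj)/(λ(k+1−j)j))⁻¹ for ℓ, w ∈ {1,…,k+1}. Then for every ℓ ∈ {1,…,k+1}: (a) for every i ∈ {1,…,k+1}, the ((k+1−ℓ,ℓ),(k+1−i,i)) entry of Q̂_{k+1,λ,γ}(u) equals a^{(k+1)}_{ℓ,i}(u); and (b) for every (s,i) ∈ Ω(k) (i.e. with s + i ≤ k), the ((k+1−ℓ,ℓ),(s,i)) entry of Q̂_{k+1,λ,γ}(u) equals Σ_{w=2}^{k+1} a^{(k+1)}_{ℓ,w}(u) · γw · (Q̂_{k,λ,γ}(u))_{(k+1−w,w−1),(s,i)}. -/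
open Finset

/-- `a^{(n)}_{ℓ,w}(u) = [w ≥ ℓ] (u + λ(n−w)w + γw)⁻¹ ∏_{j=ℓ}^{w−1} (1 + (u+γj)/(λ(n−j)j))⁻¹`. -/
noncomputable def afun (n : ℕ) (lam gam u : ℝ) (ℓ w : ℕ) : ℝ :=
  (if ℓ ≤ w then (1 : ℝ) else 0) *
    (u + lam * ((n : ℝ) - (w : ℝ)) * (w : ℝ) + gam * (w : ℝ))⁻¹ *
    ∏ j ∈ Finset.Icc ℓ (w - 1),
      (1 + (u + gam * (j : ℝ)) / (lam * ((n : ℝ) - (j : ℝ)) * (j : ℝ)))⁻¹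


/-! Write `M = u I - Q`. Along every transition of the chain the pair `(s + i, s)` decreases
lexicographically, so `M` is triangular with positive diagonal, hence invertible. No transition
leads from `Ω(k)` to the top layer `s + i = k + 1` of `Ω(k + 1)`, so the rows of `M⁻¹` indexed
by `Ω(k)` are those of the resolvent of the smaller population, extended by zero. On the top
layer the rows of `M M⁻¹ = I` form a two-term backward recurrence in `ℓ`, driven by the
recovery jumps `(k + 1 - ℓ, ℓ) → (k + 1 - ℓ, ℓ - 1)` into `Ω(k)`, and `a_{ℓ,w}` is its
Green's function. -/

namespace Matrix

variable {ι κ R : Type*} [Fintype ι] [DecidableEq ι] [Fintype κ] [DecidableEq κ] [CommRing R]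

theorem det_eq_prod_diag_of_rank {α : Type*} [LinearOrder α] (M : Matrix ι ι R) {f : ι → α}
    (hf : Function.Injective f) (hM : ∀ i j, f i < f j → M i j = 0) :
    M.det = ∏ i, M i i := by
  let : LinearOrder ι := LinearOrder.lift' f hf
  exact det_of_isLowerTriangular M fun i j hij => hM i j hij

theorem inv_submatrix_eq_of_invariant (M : Matrix ι ι R) {e : κ → ι}
    (he : Function.Injective e) (hM : ∀ x y, y ∉ Set.range e → M (e x) y = 0)
    (hMdet : IsUnit M.det) (hAdet : IsUnit (M.submatrix e e).det) :
    M⁻¹.submatrix e id = (M.submatrix e e)⁻¹ * (1 : Matrix ι ι R).submatrix e id := by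
  have hA : M.submatrix e e * M⁻¹.submatrix e id = (1 : Matrix ι ι R).submatrix e id := by
    rw [← M.mul_nonsing_inv hMdet]
    ext x z
    simp only [mul_apply, submatrix_apply, id]
    exact Fintype.sum_of_injective e he _ _
      (fun y hy => by rw [hM x y hy, zero_mul]) fun _ => rfl
  rw [← hA, nonsing_inv_mul_cancel_left _ _ hAdet]

end Matrix

abbrev State (n : ℕ) := {p // p ∈ Omega n}

def zeroExtend {n : ℕ} (v : State n → ℝ) (p : ℕ × ℕ) : ℝ :=
  if h : p ∈ Omega n then v ⟨p, h⟩ else 0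

section Resolvent

variable {n : ℕ} {lam gam u : ℝ}

lemma zeroExtend_of_mem {v : State n → ℝ} {p : ℕ × ℕ} (h : p ∈ Omega n) :
    zeroExtend v p = v ⟨p, h⟩ :=
  dif_pos h

lemma sum_ite_val_eq_mul (v : State n → ℝ) (p : ℕ × ℕ) (c : ℝ) :
    ∑ y : State n, (if y.1 = p then c else 0) * v y = c * zeroExtend v p := by
  unfold zeroExtend
  split_ifs with h
  · rw [Finset.sum_eq_single ⟨p, h⟩
      (fun y _ hy => by rw [if_neg fun e => hy (Subtype.ext e), zero_mul]) (by simp), if_pos rfl]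
  · rw [mul_zero]
    exact Finset.sum_eq_zero fun y _ => by
      rw [if_neg fun e : y.1 = p => h (e ▸ y.2), zero_mul]

lemma Qmat_apply_eq_add (x y : State n) :
    Qmat n lam gam x y =
      (if y.1 = x.1 then -(lam * x.1.1 * x.1.2 + gam * x.1.2) else 0) +
      (if y.1 = (x.1.1 - 1, x.1.2 + 1) then lam * x.1.1 * x.1.2 else 0) +
      (if y.1 = (x.1.1, x.1.2 - 1) then gam * x.1.2 else 0) := by
  obtain ⟨⟨s, i⟩, hx⟩ := x
  have hi : 1 ≤ i := (mem_Omega'.mp hx).2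
  simp only [Qmat]
  split_ifs <;> simp_all [Prod.ext_iff]
  omega

lemma sum_Qmat_mul (v : State n → ℝ) (x : State n) :
    ∑ y, Qmat n lam gam x y * v y =
      lam * x.1.1 * x.1.2 * zeroExtend v (x.1.1 - 1, x.1.2 + 1)
        + gam * x.1.2 * zeroExtend v (x.1.1, x.1.2 - 1)
        - (lam * x.1.1 * x.1.2 + gam * x.1.2) * v x := by
  simp only [Qmat_apply_eq_add, add_mul, Finset.sum_add_distrib, sum_ite_val_eq_mul,
    zeroExtend_of_mem x.2]
  ring

def stateRank (x : State n) : ℕ ×ₗ ℕ := toLex (x.1.1 + x.1.2, x.1.1)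

lemma stateRank_injective : Function.Injective (stateRank (n := n)) := by
  intro x y h
  simp only [stateRank, toLex_inj, Prod.ext_iff] at h
  exact Subtype.ext (Prod.ext h.2 (by omega))

lemma Qmat_apply_eq_zero_of_stateRank_lt {x y : State n} (h : stateRank x < stateRank y) :
    Qmat n lam gam x y = 0 := by
  obtain ⟨⟨s, i⟩, hx⟩ := x
  obtain ⟨⟨s', i'⟩, hy⟩ := y
  simp only [stateRank, Prod.Lex.toLex_lt_toLex] at h
  simp only [Qmat]
  split_ifs <;> simp_all [Prod.ext_iff] <;> omega

lemma isUnit_det_resolvent (hlam : 0 ≤ lam) (hgam : 0 < gam) (hu : 0 ≤ u) :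
    IsUnit (u • (1 : Matrix (State n) (State n) ℝ) - Qmat n lam gam).det := by
  rw [isUnit_iff_ne_zero, Matrix.det_eq_prod_diag_of_rank _ stateRank_injective fun x y h => by
    rw [Matrix.sub_apply, Qmat_apply_eq_zero_of_stateRank_lt h, Matrix.smul_apply,
      Matrix.one_apply_ne (fun e => h.ne (congrArg stateRank e)), smul_zero, sub_zero]]
  refine Finset.prod_ne_zero_iff.mpr fun x _ => ?_
  have : (0 : ℝ) < x.1.2 := by exact_mod_cast (mem_Omega.mp x.2).2
  simp only [Matrix.sub_apply, Matrix.smul_apply, Matrix.one_apply_eq, smul_eq_mul, mul_one,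
    Qmat, if_pos, sub_neg_eq_add]
  positivity

lemma Qhat_row_eq (hlam : 0 ≤ lam) (hgam : 0 < gam) (hu : 0 ≤ u) (x z : State n) :
    (u + lam * x.1.1 * x.1.2 + gam * x.1.2) * Qhat n lam gam u x z
      - lam * x.1.1 * x.1.2 * zeroExtend (Qhat n lam gam u · z) (x.1.1 - 1, x.1.2 + 1)
      - gam * x.1.2 * zeroExtend (Qhat n lam gam u · z) (x.1.1, x.1.2 - 1) =
      if x = z then 1 else 0 := by
  have h := congrFun (congrFun (Matrix.mul_nonsing_inv _ (isUnit_det_resolvent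
    (n := n) hlam hgam hu)) x) z
  rw [Matrix.sub_mul, Matrix.smul_mul, Matrix.one_mul, Matrix.sub_apply, Matrix.smul_apply,
    Matrix.mul_apply, sum_Qmat_mul, Matrix.one_apply] at h
  rw [← h, Qhat, smul_eq_mul]
  ring

end Resolvent

section TopLayer

variable {n : ℕ} {lam gam u : ℝ}

lemma top_rate_pos (hlam : 0 ≤ lam) (hgam : 0 < gam) (hu : 0 ≤ u) {ℓ : ℕ} (hℓ : 1 ≤ ℓ)
    (hn : ℓ ≤ n) : 0 < u + lam * ((n : ℝ) - ℓ) * ℓ + gam * ℓ := by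
  have : 0 ≤ (n : ℝ) - ℓ := sub_nonneg.mpr (by exact_mod_cast hn)
  have : (0 : ℝ) < ℓ := by exact_mod_cast hℓ
  positivity

lemma afun_of_lt {ℓ w : ℕ} (h : w < ℓ) : afun n lam gam u ℓ w = 0 := by
  rw [afun, if_neg (by omega), zero_mul, zero_mul]

lemma afun_self {ℓ : ℕ} (hℓ : 1 ≤ ℓ) :
    afun n lam gam u ℓ ℓ = (u + lam * ((n : ℝ) - ℓ) * ℓ + gam * ℓ)⁻¹ := by
  rw [afun, if_pos le_rfl, Finset.Icc_eq_empty_of_lt (Nat.sub_lt hℓ one_pos), Finset.prod_empty,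
    one_mul, mul_one]

lemma afun_eq_mul_afun_succ (hlam : 0 < lam) (hgam : 0 < gam) (hu : 0 ≤ u) {ℓ w : ℕ}
    (hℓ : 1 ≤ ℓ) (hℓw : ℓ < w) (hw : w ≤ n) :
    afun n lam gam u ℓ w =
      lam * ((n : ℝ) - ℓ) * ℓ / (u + lam * ((n : ℝ) - ℓ) * ℓ + gam * ℓ) *
        afun n lam gam u (ℓ + 1) w := by
  have hnℓ : 0 < (n : ℝ) - ℓ := sub_pos.mpr (by exact_mod_cast hℓw.trans_le hw)
  have hℓ0 : (0 : ℝ) < ℓ := by exact_mod_cast hℓ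
  have hd := top_rate_pos hlam.le hgam hu hℓ (hℓw.le.trans hw)
  have hIcc : Finset.Icc ℓ (w - 1) = insert ℓ (Finset.Icc (ℓ + 1) (w - 1)) := by
    ext j
    simp only [Finset.mem_Icc, Finset.mem_insert]
    omega
  have hfactor : (1 + (u + gam * ℓ) / (lam * ((n : ℝ) - ℓ) * ℓ))⁻¹ =
      lam * ((n : ℝ) - ℓ) * ℓ / (u + lam * ((n : ℝ) - ℓ) * ℓ + gam * ℓ) := by
    rw [inv_eq_iff_eq_inv, inv_div]
    field_simp
    ring
  rw [afun, afun, if_pos hℓw.le, if_pos (Nat.succ_le_of_lt hℓw), hIcc,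
    Finset.prod_insert (by simp), hfactor]
  ring

lemma afun_recurrence (hlam : 0 < lam) (hgam : 0 < gam) (hu : 0 ≤ u) {ℓ w : ℕ} (hℓ : 1 ≤ ℓ)
    (hw : w ≤ n) :
    (u + lam * ((n : ℝ) - ℓ) * ℓ + gam * ℓ) * afun n lam gam u ℓ w
      - lam * ((n : ℝ) - ℓ) * ℓ * afun n lam gam u (ℓ + 1) w = if ℓ = w then 1 else 0 := by
  rcases lt_trichotomy ℓ w with hlt | rfl | hgt
  · have hd := top_rate_pos hlam.le hgam hu hℓ (hlt.le.trans hw)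
    rw [afun_eq_mul_afun_succ hlam hgam hu hℓ hlt hw, if_neg hlt.ne, ← mul_assoc,
      mul_div_cancel₀ _ hd.ne', sub_self]
  · have hd := top_rate_pos hlam.le hgam hu hℓ hw
    rw [afun_self hℓ, afun_of_lt (Nat.lt_succ_self ℓ), mul_inv_cancel₀ hd.ne', if_pos rfl]
    ring
  · rw [afun_of_lt hgt, afun_of_lt (hgt.trans (Nat.lt_succ_self ℓ)), if_neg hgt.ne']
    ring

lemma eq_sum_afun_of_recurrence (hlam : 0 < lam) (hgam : 0 < gam) (hu : 0 ≤ u) {X b : ℕ → ℝ}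
    (hX : ∀ ℓ, 1 ≤ ℓ → ℓ ≤ n →
      (u + lam * ((n : ℝ) - ℓ) * ℓ + gam * ℓ) * X ℓ - lam * ((n : ℝ) - ℓ) * ℓ * X (ℓ + 1) = b ℓ)
    {ℓ : ℕ} (hℓ : 1 ≤ ℓ) (hn : ℓ ≤ n) :
    X ℓ = ∑ w ∈ Finset.Icc 1 n, afun n lam gam u ℓ w * b w := by
  set Y : ℕ → ℝ := fun ℓ => ∑ w ∈ Finset.Icc 1 n, afun n lam gam u ℓ w * b w
  have hY : ∀ ℓ, 1 ≤ ℓ → ℓ ≤ n →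
      (u + lam * ((n : ℝ) - ℓ) * ℓ + gam * ℓ) * Y ℓ - lam * ((n : ℝ) - ℓ) * ℓ * Y (ℓ + 1) =
        b ℓ := by
    intro ℓ hℓ hn
    simp only [Y, Finset.mul_sum, ← Finset.sum_sub_distrib]
    calc _ = ∑ w ∈ Finset.Icc 1 n, if ℓ = w then b w else 0 :=
          Finset.sum_congr rfl fun w hw => by
            rw [← one_mul (b w), ← zero_mul (b w), ← ite_mul,
              ← afun_recurrence hlam hgam hu hℓ (Finset.mem_Icc.mp hw).2]
            ring
      _ = b ℓ := by rw [Finset.sum_ite_eq, if_pos (Finset.mem_Icc.mpr ⟨hℓ, hn⟩)]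
  -- `X - Y` solves the homogeneous recurrence, whose last coefficient `λ (n - n) n` vanishes.
  have step : ∀ ℓ, 1 ≤ ℓ → ℓ ≤ n → (ℓ < n → X (ℓ + 1) = Y (ℓ + 1)) → X ℓ = Y ℓ := by
    intro ℓ hℓ hn hnext
    have hr : lam * ((n : ℝ) - ℓ) * ℓ * (X (ℓ + 1) - Y (ℓ + 1)) = 0 := by
      rcases hn.lt_or_eq with hlt | rfl
      · rw [hnext hlt, sub_self, mul_zero]
      · rw [sub_self, mul_zero, zero_mul, zero_mul]
    refine mul_left_cancel₀ (top_rate_pos hlam.le hgam hu hℓ hn).ne' ?_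
    linarith [hX ℓ hℓ hn, hY ℓ hℓ hn]
  revert hℓ
  induction hn using Nat.decreasingInduction with
  | self => exact fun hℓ => step n hℓ le_rfl fun h => absurd h (lt_irrefl n)
  | of_succ ℓ hlt ih => exact fun hℓ => step ℓ hℓ hlt.le fun _ => ih (by omega)

lemma Qhat_top_eq_sum_afun (hlam : 0 < lam) (hgam : 0 < gam) (hu : 0 ≤ u) (z : State n)
    {ℓ : ℕ} (hℓ : 1 ≤ ℓ) (hn : ℓ ≤ n) :
    zeroExtend (Qhat n lam gam u · z) (n - ℓ, ℓ) =
      ∑ w ∈ Finset.Icc 1 n, afun n lam gam u ℓ w *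
        ((if (n - w, w) = z.1 then 1 else 0)
          + gam * w * zeroExtend (Qhat n lam gam u · z) (n - w, w - 1)) := by
  refine eq_sum_afun_of_recurrence (X := fun ℓ => zeroExtend (Qhat n lam gam u · z) (n - ℓ, ℓ))
    hlam hgam hu (fun ℓ hℓ hn => ?_) hℓ hn
  have hrow := Qhat_row_eq hlam.le hgam hu ⟨(n - ℓ, ℓ), pair_mem_Omega (by omega) hℓ⟩ z
  simp only [Nat.cast_sub hn, Nat.sub_sub, Subtype.ext_iff] at hrow
  rw [zeroExtend_of_mem (pair_mem_Omega (by omega) hℓ), ← hrow]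
  ring

end TopLayer

section Embedding

variable {k : ℕ} {lam gam u : ℝ}

lemma Omega_subset_succ : Omega k ⊆ Omega (k + 1) := fun _ hp => by
  have := mem_Omega.mp hp
  exact mem_Omega.mpr (by omega)

def liftState (x : State k) : State (k + 1) := ⟨x.1, Omega_subset_succ x.2⟩

lemma liftState_injective : Function.Injective (liftState (k := k)) :=
  fun _ _ h => Subtype.ext (Subtype.mk.inj h)

lemma resolvent_apply_liftState_eq_zero (x : State k) {y : State (k + 1)}
    (hy : y ∉ Set.range liftState) :
    (u • (1 : Matrix (State (k + 1)) (State (k + 1)) ℝ) - Qmat (k + 1) lam gam) (liftState x) y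
      = 0 := by
  have hyk : y.1 ∉ Omega k := fun h => hy ⟨⟨y.1, h⟩, rfl⟩
  rw [Matrix.sub_apply, Matrix.smul_apply, Matrix.one_apply_ne (fun h => hy ⟨x, h⟩), smul_zero,
    zero_sub, neg_eq_zero]
  obtain ⟨⟨s, i⟩, hx⟩ := x
  obtain ⟨⟨s', i'⟩, hy'⟩ := y
  have hsi := (mem_Omega'.mp hx).1
  have hsum : s' + i' = k + 1 := by
    simp only [mem_Omega'] at hy' hyk
    omega
  simp only [Qmat_apply_eq_add, liftState, Prod.mk.injEq]
  split_ifs <;> try omega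
  -- in `ℕ` the infection target of `(0, i)` is `(0 - 1, i + 1) = (0, i + 1)`, but its rate is `0`
  · obtain rfl : s = 0 := by omega
    simp
  · simp

lemma Qhat_succ_liftState_apply (hlam : 0 < lam) (hgam : 0 < gam) (hu : 0 ≤ u)
    (x : State k) (y : State (k + 1)) :
    Qhat (k + 1) lam gam u (liftState x) y =
      ∑ x', Qhat k lam gam u x x' *
        (1 : Matrix (State (k + 1)) (State (k + 1)) ℝ) (liftState x') y := by
  have hsub : (u • (1 : Matrix (State (k + 1)) (State (k + 1)) ℝ) - Qmat (k + 1) lam gam).submatrix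
      liftState liftState = u • 1 - Qmat k lam gam := by
    ext x y
    simp only [Matrix.submatrix_apply, Matrix.sub_apply, Matrix.smul_apply, Matrix.one_apply,
      liftState_injective.eq_iff]
    rfl
  have h := Matrix.inv_submatrix_eq_of_invariant _ liftState_injective
    (fun x y hy => resolvent_apply_liftState_eq_zero (u := u) (lam := lam) (gam := gam) x hy)
    (isUnit_det_resolvent hlam.le hgam hu) (hsub ▸ isUnit_det_resolvent hlam.le hgam hu)
  rw [hsub] at h
  exact congrFun (congrFun h x) y

lemma Qhat_succ_liftState (hlam : 0 < lam) (hgam : 0 < gam) (hu : 0 ≤ u) (x z : State k) :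
    Qhat (k + 1) lam gam u (liftState x) (liftState z) = Qhat k lam gam u x z := by
  rw [Qhat_succ_liftState_apply hlam hgam hu, Finset.sum_eq_single z
    (fun x' _ h => by rw [Matrix.one_apply_ne (liftState_injective.ne h), mul_zero]) (by simp),
    Matrix.one_apply_eq, mul_one]

lemma Qhat_succ_liftState_eq_zero (hlam : 0 < lam) (hgam : 0 < gam) (hu : 0 ≤ u) (x : State k)
    {y : State (k + 1)} (hy : y.1 ∉ Omega k) : Qhat (k + 1) lam gam u (liftState x) y = 0 := by
  rw [Qhat_succ_liftState_apply hlam hgam hu]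
  exact Finset.sum_eq_zero fun x' _ => by
    rw [Matrix.one_apply_ne fun h => hy (by rw [← h]; exact x'.2), mul_zero]

lemma zeroExtend_Qhat_succ_eq_zero (hlam : 0 < lam) (hgam : 0 < gam) (hu : 0 ≤ u)
    {z : State (k + 1)} (hz : z.1 ∉ Omega k) {p : ℕ × ℕ} (hp : p.1 + p.2 ≤ k) :
    zeroExtend (Qhat (k + 1) lam gam u · z) p = 0 := by
  unfold zeroExtend
  split_ifs with h
  · exact Qhat_succ_liftState_eq_zero hlam hgam hu ⟨p, mem_Omega.mpr ⟨hp, (mem_Omega.mp h).2⟩⟩ hz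
  · rfl

lemma zeroExtend_Qhat_succ_liftState (hlam : 0 < lam) (hgam : 0 < gam) (hu : 0 ≤ u)
    (z : State k) {p : ℕ × ℕ} (hp : p.1 + p.2 ≤ k) :
    zeroExtend (Qhat (k + 1) lam gam u · (liftState z)) p =
      zeroExtend (Qhat k lam gam u · z) p := by
  unfold zeroExtend
  by_cases h : p ∈ Omega k
  · rw [dif_pos h, dif_pos (Omega_subset_succ h)]
    exact Qhat_succ_liftState hlam hgam hu ⟨p, h⟩ z
  · rw [dif_neg h, dif_neg fun h' => h (mem_Omega.mpr ⟨hp, (mem_Omega.mp h').2⟩)]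

lemma Qhat_succ_top_top (hlam : 0 < lam) (hgam : 0 < gam) (hu : 0 ≤ u) {ℓ i : ℕ} (hℓ1 : 1 ≤ ℓ)
    (hℓ : ℓ ≤ k + 1) (hi1 : 1 ≤ i) (hi : i ≤ k + 1) (hx : (k + 1 - ℓ, ℓ) ∈ Omega (k + 1))
    (hz : (k + 1 - i, i) ∈ Omega (k + 1)) :
    Qhat (k + 1) lam gam u ⟨_, hx⟩ ⟨_, hz⟩ = afun (k + 1) lam gam u ℓ i := by
  have hzk : (k + 1 - i, i) ∉ Omega k := fun h => by
    have := mem_Omega'.mp h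
    omega
  rw [← zeroExtend_of_mem (v := (Qhat (k + 1) lam gam u · ⟨_, hz⟩)),
    Qhat_top_eq_sum_afun hlam hgam hu _ hℓ1 hℓ]
  calc _ = ∑ w ∈ Finset.Icc 1 (k + 1), if w = i then afun (k + 1) lam gam u ℓ w else 0 :=
        Finset.sum_congr rfl fun w hw => by
          have hw := Finset.mem_Icc.mp hw
          rw [zeroExtend_Qhat_succ_eq_zero hlam hgam hu hzk (by dsimp only; omega)]
          simp only [Prod.mk.injEq]
          split_ifs <;> first | omega | ring
    _ = afun (k + 1) lam gam u ℓ i := by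
        rw [Finset.sum_ite_eq', if_pos (Finset.mem_Icc.mpr ⟨hi1, hi⟩)]

lemma Qhat_succ_top_liftState (hlam : 0 < lam) (hgam : 0 < gam) (hu : 0 ≤ u) {ℓ : ℕ}
    (hℓ1 : 1 ≤ ℓ) (hℓ : ℓ ≤ k + 1) (hx : (k + 1 - ℓ, ℓ) ∈ Omega (k + 1)) (z : State k) :
    Qhat (k + 1) lam gam u ⟨_, hx⟩ (liftState z) =
      ∑ w ∈ Finset.Icc 2 (k + 1), afun (k + 1) lam gam u ℓ w * (gam * w) *
        zeroExtend (Qhat k lam gam u · z) (k + 1 - w, w - 1) := by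
  have hzk := (mem_Omega.mp z.2).1
  rw [← zeroExtend_of_mem (v := (Qhat (k + 1) lam gam u · (liftState z))),
    Qhat_top_eq_sum_afun hlam hgam hu _ hℓ1 hℓ]
  calc _ = ∑ w ∈ Finset.Icc 1 (k + 1), afun (k + 1) lam gam u ℓ w * (gam * w) *
        zeroExtend (Qhat k lam gam u · z) (k + 1 - w, w - 1) :=
        Finset.sum_congr rfl fun w hw => by
          have hw := Finset.mem_Icc.mp hw
          rw [zeroExtend_Qhat_succ_liftState hlam hgam hu z (by dsimp only; omega),
            if_neg fun h => by
              have : k + 1 - w + w = z.1.1 + z.1.2 := congrArg (fun p : ℕ × ℕ => p.1 + p.2) h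
              omega]
          ring
    _ = _ := (Finset.sum_subset (Finset.Icc_subset_Icc_left one_le_two) fun w hw hw2 => by
        obtain rfl : w = 1 := by simp only [Finset.mem_Icc] at hw hw2; omega
        simp [zeroExtend, mem_Omega']).symm

end Embedding

/-- block description of the resolvent `Q̂_{k+1,λ,γ}(u)`.
(a) Its entries between states of `Ω(k+1)` with `s + i = k + 1` are given by
`a^{(k+1)}_{ℓ,i}(u)`; (b) its entries from such states towards states of `Ω(k)` are
`Σ_{w=2}^{k+1} a^{(k+1)}_{ℓ,w}(u) γ w (Q̂_{k,λ,γ}(u))_{(k+1−w,w−1),(s,i)}`. -/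
theorem statement6 (k : ℕ) (lam gam u : ℝ) (hlam : 0 < lam) (hgam : 0 < gam)
    (hu : 0 ≤ u) (ℓ : ℕ) (hℓ1 : 1 ≤ ℓ) (hℓk : ℓ ≤ k + 1) :
    (∀ i : ℕ, ∀ hi1 : 1 ≤ i, ∀ hik : i ≤ k + 1,
      Qhat (k + 1) lam gam u ⟨(k + 1 - ℓ, ℓ), pair_mem_Omega (by omega) hℓ1⟩
          ⟨(k + 1 - i, i), pair_mem_Omega (by omega) hi1⟩ =
        afun (k + 1) lam gam u ℓ i) ∧
    (∀ s i : ℕ, ∀ hsi : (s, i) ∈ Omega k,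
      Qhat (k + 1) lam gam u ⟨(k + 1 - ℓ, ℓ), pair_mem_Omega (by omega) hℓ1⟩
          ⟨(s, i), pair_mem_Omega
            (le_trans (mem_Omega'.mp hsi).1 (Nat.le_succ k)) (mem_Omega'.mp hsi).2⟩ =
        ∑ w ∈ (Finset.Icc 2 (k + 1)).attach,
          afun (k + 1) lam gam u ℓ w.val * (gam * (w.val : ℝ)) *
            Qhat k lam gam u
              ⟨(k + 1 - w.val, w.val - 1),
                pair_mem_Omega (by have := Finset.mem_Icc.mp w.2; omega)
                  (by have := Finset.mem_Icc.mp w.2; omega)⟩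
              ⟨(s, i), hsi⟩) := by
  refine ⟨fun i hi1 hik => Qhat_succ_top_top hlam hgam hu hℓ1 hℓk hi1 hik _ _,
    fun s i hsi => ?_⟩
  refine (Qhat_succ_top_liftState hlam hgam hu hℓ1 hℓk _ ⟨(s, i), hsi⟩).trans ?_
  rw [← Finset.sum_attach]
  exact Finset.sum_congr rfl fun w _ => by rw [zeroExtend_of_mem]
end
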